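/- arXiv:1103.4019 — 2 statements merged into one kernel-verified Lean document; each statement's English description precedes it below -/
import Mathlib

section
/- Let X be a set, (S_n) a sequence of finite covers of X, Γ a curve family in X, and q > p ≥ 1. Assume mod_p(Γ,S_n) > 0 for all n, and that there is a sequence (η_n) of positive numbers tending to zero such that sup_{s∈S_n} mod_q(Γ(s),S_n) ≤ η_n for all n. Then the ratio mod_q(Γ,S_n)/mod_p(Γ,S_n) tends to 0 as n → ∞. -/
open scoped ENNReal
open Set

attribute [local instance] Classical.propDecidable

namespace CombModFin

variable {X : Type*}

/-- The `ρ`-length of a set `K`: the sum of `ρ s` over the elements `s` of the cover `S`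
    meeting `K`. -/
noncomputable def len (S : Finset (Set X)) (ρ : Set X → ℝ≥0∞) (K : Set X) : ℝ≥0∞ :=
  ∑ s ∈ S.filter fun s => (s ∩ K).Nonempty, ρ s

/-- `L_ρ(Γ,S)`: the infimum of the `ρ`-lengths of the curves of `Γ`. -/
noncomputable def Lmin (S : Finset (Set X)) (ρ : Set X → ℝ≥0∞) (Γ : Set (Set X)) : ℝ≥0∞ :=
  ⨅ γ ∈ Γ, len S ρ γ

/-- `V_p(ρ)`: the `p`-volume of the admissible metric `ρ`. -/
noncomputable def vol (S : Finset (Set X)) (ρ : Set X → ℝ≥0∞) (p : ℝ) : ℝ≥0∞ :=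
  ∑ s ∈ S, ρ s ^ p

/-- An admissible metric: a function `ρ : S → [0,∞)` which is not identically zero on `S`. -/
def Admissible (S : Finset (Set X)) (ρ : Set X → ℝ≥0∞) : Prop :=
  (∀ s ∈ S, ρ s ≠ ∞) ∧ ∃ s ∈ S, ρ s ≠ 0

/-- `mod_p(Γ,ρ,S) = V_p(ρ) / L_ρ(Γ,S)^p`. -/
noncomputable def modWith (S : Finset (Set X)) (Γ : Set (Set X)) (ρ : Set X → ℝ≥0∞)
    (p : ℝ) : ℝ≥0∞ :=
  vol S ρ p / Lmin S ρ Γ ^ p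

/-- The combinatorial `p`-modulus: the infimum of `mod_p(Γ,ρ,S)` over admissible metrics `ρ`. -/
noncomputable def cmod (S : Finset (Set X)) (Γ : Set (Set X)) (p : ℝ) : ℝ≥0∞ :=
  ⨅ (ρ : Set X → ℝ≥0∞) (_ : Admissible S ρ), modWith S Γ ρ p

end CombModFin

/-!
Take a metric `ρ` for `Γ`, normalized so that every curve has `ρ`-length at least `1`, with
`V_p(ρ)` close to `mod_p(Γ)`, and a height `t` with `t^q` slightly above `η`. Cap `ρ` at `t`,
and on each of the heavy cells `s` where `ρ s > t` raise it to a normalized metric `τ_s` for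
`Γ(s)` with `V_q(τ_s) < t^q`. A curve through a heavy cell `s` has length at least `1` for `τ_s`;
any other curve only sees cells where `ρ ≤ t`, so its length does not drop. By Chebyshev there
are at most `V_p(ρ)/t^p` heavy cells, so the new metric has
`V_q ≤ t^(q-p) V_p(ρ) + (V_p(ρ)/t^p) t^q = 2 t^(q-p) V_p(ρ)`, whence
`mod_q(Γ) ≤ 4 t^(q-p) mod_p(Γ)` with `t^(q-p) ≈ η^((q-p)/q) → 0`.
-/

namespace CombModFin

variable {X : Type*} {T : Finset (Set X)}

lemma len_mono {ρ σ : Set X → ℝ≥0∞} (h : ∀ u ∈ T, ρ u ≤ σ u) (K : Set X) :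
    len T ρ K ≤ len T σ K :=
  Finset.sum_le_sum fun u hu => h u (Finset.mem_filter.mp hu).1

lemma len_ne_top {ρ : Set X → ℝ≥0∞} (h : ∀ u ∈ T, ρ u ≠ ∞) (K : Set X) : len T ρ K ≠ ∞ :=
  ENNReal.sum_ne_top.mpr fun u hu => h u (Finset.mem_filter.mp hu).1

lemma vol_ne_zero {ρ : Set X → ℝ≥0∞} {r : ℝ} (hr : 0 < r) (h : ∃ s ∈ T, ρ s ≠ 0) :
    vol T ρ r ≠ 0 := by
  obtain ⟨s, hs, hs0⟩ := h
  simp only [vol, ne_eq, Finset.sum_eq_zero_iff, not_forall]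
  exact ⟨s, hs, by simp [ENNReal.rpow_eq_zero_iff, hs0, hr.not_gt]⟩

lemma exists_admissible_modWith_lt {Γ : Set (Set X)} {r : ℝ} {c : ℝ≥0∞}
    (h : cmod T Γ r < c) : ∃ ρ, Admissible T ρ ∧ modWith T Γ ρ r < c := by
  simpa only [cmod, iInf_lt_iff, exists_prop] using h

lemma cmod_empty_eq_zero {r : ℝ} (hr : 0 < r) {ρ : Set X → ℝ≥0∞} (hρ : Admissible T ρ) :
    cmod T ∅ r = 0 :=
  le_antisymm ((iInf₂_le ρ hρ).trans_eq (by simp [modWith, Lmin, ENNReal.top_rpow_of_pos hr]))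
    zero_le

lemma exists_one_le_len_vol_lt {Δ : Set (Set X)} {r : ℝ} {c : ℝ≥0∞} (hr : 0 < r)
    (h : cmod T Δ r < c) :
    ∃ τ : Set X → ℝ≥0∞, (∀ u ∈ T, τ u ≠ ∞) ∧ (∀ γ ∈ Δ, 1 ≤ len T τ γ) ∧ vol T τ r < c := by
  obtain ⟨ρ, hρ, hmod⟩ := exists_admissible_modWith_lt h
  have hL0 : Lmin T ρ Δ ≠ 0 := by
    intro hL
    rw [modWith, hL, ENNReal.zero_rpow_of_pos hr, ENNReal.div_zero (vol_ne_zero hr hρ.2)] at hmod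
    exact not_top_lt hmod
  set L := Lmin T ρ Δ
  refine ⟨fun u => ρ u / L, fun u hu => ENNReal.div_ne_top (hρ.1 u hu) hL0, fun γ hγ => ?_, ?_⟩
  · have hLγ : L ≤ len T ρ γ := iInf₂_le γ hγ
    have hLtop : L ≠ ∞ := ne_top_of_le_ne_top (len_ne_top hρ.1 γ) hLγ
    have : len T (fun u => ρ u / L) γ = len T ρ γ / L := by
      simp only [len, div_eq_mul_inv, Finset.sum_mul]
    rw [this, ENNReal.le_div_iff_mul_le (Or.inl hL0) (Or.inl hLtop), one_mul]
    exact hLγ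
  · have : vol T (fun u => ρ u / L) r = vol T ρ r / L ^ r := by
      simp only [vol, div_eq_mul_inv, ENNReal.mul_rpow_of_nonneg _ _ hr.le, ENNReal.inv_rpow,
        Finset.sum_mul]
    rwa [this]

lemma cmod_le_vol {Γ : Set (Set X)} {τ : Set X → ℝ≥0∞} {r : ℝ} (hr : 0 < r)
    (hΓ : Γ.Nonempty) (hfin : ∀ u ∈ T, τ u ≠ ∞) (hlen : ∀ γ ∈ Γ, 1 ≤ len T τ γ) :
    cmod T Γ r ≤ vol T τ r := by
  obtain ⟨γ, hγ⟩ := hΓ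
  have hadm : Admissible T τ := by
    obtain ⟨u, hu, hu0⟩ :=
      Finset.exists_ne_zero_of_sum_ne_zero (one_pos.trans_le (hlen γ hγ)).ne'
    exact ⟨hfin, u, (Finset.mem_filter.mp hu).1, hu0⟩
  calc cmod T Γ r ≤ vol T τ r / Lmin T τ Γ ^ r := iInf₂_le τ hadm
    _ ≤ vol T τ r / 1 := ENNReal.div_le_div_left (ENNReal.one_le_rpow (le_iInf₂ hlen) hr) _
    _ = vol T τ r := div_one _

lemma rpow_sup_le_add (a b : ℝ≥0∞) (q : ℝ) : (a ⊔ b) ^ q ≤ a ^ q + b ^ q := by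
  rcases le_total a b with h | h
  · rw [sup_eq_right.mpr h]; exact le_add_self
  · rw [sup_eq_left.mpr h]; exact le_self_add

lemma rpow_min_le (a t : ℝ≥0∞) {p q : ℝ} (hp : 0 ≤ p) (hpq : p ≤ q) :
    min a t ^ q ≤ t ^ (q - p) * a ^ p :=
  calc min a t ^ q = min a t ^ (q - p) * min a t ^ p := by
        rw [← ENNReal.rpow_add_of_nonneg _ _ (sub_nonneg.mpr hpq) hp, sub_add_cancel]
    _ ≤ t ^ (q - p) * a ^ p :=
        mul_le_mul' (ENNReal.rpow_le_rpow (min_le_right _ _) (sub_nonneg.mpr hpq))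
          (ENNReal.rpow_le_rpow (min_le_left _ _) hp)

noncomputable def heavy (T : Finset (Set X)) (ρ : Set X → ℝ≥0∞) (t : ℝ≥0∞) : Finset (Set X) :=
  T.filter fun s => t < ρ s

noncomputable def truncSup (T : Finset (Set X)) (ρ : Set X → ℝ≥0∞) (t : ℝ≥0∞)
    (τ : Set X → Set X → ℝ≥0∞) (u : Set X) : ℝ≥0∞ :=
  min (ρ u) t ⊔ (heavy T ρ t).sup fun s => τ s u

variable {ρ : Set X → ℝ≥0∞} {t : ℝ≥0∞} {τ : Set X → Set X → ℝ≥0∞}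

lemma mem_heavy {s : Set X} : s ∈ heavy T ρ t ↔ s ∈ T ∧ t < ρ s :=
  Finset.mem_filter

lemma card_heavy_mul_rpow_le_vol {p : ℝ} (hp : 0 ≤ p) :
    ((heavy T ρ t).card : ℝ≥0∞) * t ^ p ≤ vol T ρ p :=
  calc ((heavy T ρ t).card : ℝ≥0∞) * t ^ p = ∑ _s ∈ heavy T ρ t, t ^ p := by
        rw [Finset.sum_const, nsmul_eq_mul]
    _ ≤ ∑ s ∈ heavy T ρ t, ρ s ^ p :=
        Finset.sum_le_sum fun s hs => ENNReal.rpow_le_rpow (mem_heavy.mp hs).2.le hp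
    _ ≤ vol T ρ p := Finset.sum_le_sum_of_subset (Finset.filter_subset _ _)

lemma truncSup_ne_top (ht : t ≠ ∞) (hτ : ∀ s ∈ T, ∀ u ∈ T, τ s u ≠ ∞) :
    ∀ u ∈ T, truncSup T ρ t τ u ≠ ∞ := fun u hu =>
  (max_lt ((min_le_right _ _).trans_lt ht.lt_top)
    ((Finset.sup_lt_iff bot_lt_top).mpr fun s hs =>
      (hτ s (mem_heavy.mp hs).1 u hu).lt_top)).ne

lemma one_le_len_truncSup {γ : Set X} (hρ : 1 ≤ len T ρ γ)
    (hτ : ∀ s ∈ heavy T ρ t, (s ∩ γ).Nonempty → 1 ≤ len T (τ s) γ) :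
    1 ≤ len T (truncSup T ρ t τ) γ := by
  by_cases hmeet : ∃ s ∈ heavy T ρ t, (s ∩ γ).Nonempty
  · obtain ⟨s, hs, hsγ⟩ := hmeet
    refine (hτ s hs hsγ).trans (len_mono (fun u _ => ?_) γ)
    exact (Finset.le_sup (f := fun s => τ s u) hs).trans le_sup_right
  · refine hρ.trans (Finset.sum_le_sum fun u hu => ?_)
    obtain ⟨huT, huγ⟩ := Finset.mem_filter.mp hu
    have hρu : ρ u ≤ t := not_lt.mp fun h => hmeet ⟨u, mem_heavy.mpr ⟨huT, h⟩, huγ⟩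
    calc ρ u = min (ρ u) t := (min_eq_left hρu).symm
      _ ≤ truncSup T ρ t τ u := le_sup_left

lemma vol_truncSup_le {p q : ℝ} (hp : 0 ≤ p) (hpq : p < q) :
    vol T (truncSup T ρ t τ) q ≤
      t ^ (q - p) * vol T ρ p + ∑ s ∈ heavy T ρ t, vol T (τ s) q := by
  have hq : 0 < q := hp.trans_lt hpq
  simp only [vol]
  rw [Finset.mul_sum, Finset.sum_comm, ← Finset.sum_add_distrib]
  refine Finset.sum_le_sum fun u _ => (rpow_sup_le_add _ _ q).trans (add_le_add ?_ ?_)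
  · exact rpow_min_le _ _ hp hpq.le
  · exact Finset.apply_sup_le_sum (f := (· ^ q)) (ENNReal.zero_rpow_of_pos hq)
      (rpow_sup_le_add _ _ q) _

theorem cmod_le_two_mul_rpow_mul {Γ : Set (Set X)} {p q : ℝ} {c : ℝ≥0∞} (hp : 0 < p)
    (hpq : p < q) (ht : t ≠ ∞) (hc : cmod T Γ p < c)
    (hloc : ∀ s ∈ T, cmod T {γ ∈ Γ | (γ ∩ s).Nonempty} q < t ^ q) :
    cmod T Γ q ≤ 2 * t ^ (q - p) * c := by
  have hq : 0 < q := hp.trans hpq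
  rcases Γ.eq_empty_or_nonempty with rfl | hΓ
  · obtain ⟨ρ, hρ, -⟩ := exists_admissible_modWith_lt hc
    rw [cmod_empty_eq_zero hq hρ]
    exact zero_le
  obtain ⟨ρ, hρfin, hρlen, hρvol⟩ := exists_one_le_len_vol_lt hp hc
  choose! τ hτfin hτlen hτvol using fun s (hs : s ∈ T) => exists_one_le_len_vol_lt hq (hloc s hs)
  have hlen : ∀ γ ∈ Γ, 1 ≤ len T (truncSup T ρ t τ) γ := fun γ hγ =>
    one_le_len_truncSup (hρlen γ hγ) fun s hs hsγ =>
      hτlen s (mem_heavy.mp hs).1 γ ⟨hγ, by rwa [Set.inter_comm]⟩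
  have hheavy : ∑ s ∈ heavy T ρ t, vol T (τ s) q ≤ vol T ρ p * t ^ (q - p) :=
    calc ∑ s ∈ heavy T ρ t, vol T (τ s) q ≤ ∑ _s ∈ heavy T ρ t, t ^ q :=
          Finset.sum_le_sum fun s hs => (hτvol s (mem_heavy.mp hs).1).le
      _ = ((heavy T ρ t).card : ℝ≥0∞) * t ^ p * t ^ (q - p) := by
          rw [Finset.sum_const, nsmul_eq_mul, mul_assoc,
            ← ENNReal.rpow_add_of_nonneg _ _ hp.le (by linarith), add_sub_cancel]
      _ ≤ vol T ρ p * t ^ (q - p) := by gcongr; exact card_heavy_mul_rpow_le_vol hp.le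
  calc cmod T Γ q ≤ vol T (truncSup T ρ t τ) q :=
        cmod_le_vol hq hΓ (truncSup_ne_top ht hτfin) hlen
    _ ≤ t ^ (q - p) * vol T ρ p + ∑ s ∈ heavy T ρ t, vol T (τ s) q := vol_truncSup_le hp.le hpq
    _ ≤ t ^ (q - p) * vol T ρ p + vol T ρ p * t ^ (q - p) := by gcongr
    _ = 2 * t ^ (q - p) * vol T ρ p := by ring
    _ ≤ 2 * t ^ (q - p) * c := by gcongr

theorem cmod_div_cmod_le {Γ : Set (Set X)} {p q : ℝ} (hp : 0 < p) (hpq : p < q) (ht : t ≠ ∞)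
    (hmod : cmod T Γ p ≠ 0) (hloc : ∀ s ∈ T, cmod T {γ ∈ Γ | (γ ∩ s).Nonempty} q < t ^ q) :
    cmod T Γ q / cmod T Γ p ≤ 4 * t ^ (q - p) := by
  rcases eq_or_ne (cmod T Γ p) ∞ with htop | htop
  · rw [htop, ENNReal.div_top]
    exact zero_le
  refine ENNReal.div_le_of_le_mul ?_
  have hlt : cmod T Γ p < 2 * cmod T Γ p := by
    rw [two_mul]
    exact ENNReal.lt_add_right htop hmod
  calc cmod T Γ q ≤ 2 * t ^ (q - p) * (2 * cmod T Γ p) :=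
        cmod_le_two_mul_rpow_mul hp hpq ht hlt hloc
    _ = 4 * t ^ (q - p) * cmod T Γ p := by ring

end CombModFin

open CombModFin Filter Topology

theorem stmt1_general {X : Type*} (S : ℕ → Finset (Set X))
    (Γ : Set (Set X))
    (p q : ℝ) (hp : 1 ≤ p) (hpq : p < q)
    (hpos : ∀ n, 0 < cmod (S n) Γ p)
    (η : ℕ → ℝ) (hη : ∀ n, 0 < η n)
    (hη0 : Filter.Tendsto η Filter.atTop (nhds 0))
    (hsup : ∀ n, ⨆ s ∈ S n, cmod (S n) {γ ∈ Γ | (γ ∩ s).Nonempty} q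
        ≤ ENNReal.ofReal (η n)) :
    Filter.Tendsto (fun n => cmod (S n) Γ q / cmod (S n) Γ p)
      Filter.atTop (nhds 0) := by
  have hp0 : 0 < p := one_pos.trans_le hp
  have hq : 0 < q := hp0.trans hpq
  set t : ℕ → ℝ≥0∞ := fun n => ENNReal.ofReal (2 * η n) ^ q⁻¹
  have hloc : ∀ n, ∀ s ∈ S n, cmod (S n) {γ ∈ Γ | (γ ∩ s).Nonempty} q < t n ^ q := by
    intro n s hs
    calc _ ≤ ENNReal.ofReal (η n) :=
          (le_iSup₂ (f := fun s (_ : s ∈ S n) => cmod (S n) {γ ∈ Γ | (γ ∩ s).Nonempty} q)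
            s hs).trans (hsup n)
      _ < t n ^ q := by
          rw [ENNReal.rpow_inv_rpow hq.ne', ENNReal.ofReal_lt_ofReal_iff (by linarith [hη n])]
          linarith [hη n]
  have hbound : ∀ n, cmod (S n) Γ q / cmod (S n) Γ p ≤ 4 * t n ^ (q - p) := fun n =>
    cmod_div_cmod_le hp0 hpq (ENNReal.rpow_ne_top_of_nonneg (inv_nonneg.mpr hq.le)
      ENNReal.ofReal_ne_top) (hpos n).ne' (hloc n)
  have ht : Tendsto t atTop (𝓝 0) := by
    have h := (ENNReal.tendsto_ofReal (hη0.const_mul 2)).ennrpow_const q⁻¹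
    rwa [mul_zero, ENNReal.ofReal_zero, ENNReal.zero_rpow_of_pos (inv_pos.mpr hq)] at h
  exact tendsto_of_tendsto_of_tendsto_of_le_of_le tendsto_const_nhds
    ((ENNReal.tendsto_const_mul_rpow_nhds_zero_of_pos (by norm_num) (sub_pos.2 hpq)).comp ht)
    (fun _ => zero_le) hbound

/-- If `mod_p(Γ,S_n) > 0` for all `n` and `sup_{s∈S_n} mod_q(Γ(s),S_n) ≤ η_n → 0`,
then `mod_q(Γ,S_n)/mod_p(Γ,S_n) → 0` as `n → ∞` (here `q > p ≥ 1`). -/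
theorem stmt1 {X : Type*} (S : ℕ → Finset (Set X))
    (hcover : ∀ n, ∀ x : X, ∃ s ∈ S n, x ∈ s)
    (Γ : Set (Set X)) (hΓ : ∀ γ ∈ Γ, γ.Nonempty)
    (p q : ℝ) (hp : 1 ≤ p) (hpq : p < q)
    (hpos : ∀ n, 0 < cmod (S n) Γ p)
    (η : ℕ → ℝ) (hη : ∀ n, 0 < η n)
    (hη0 : Filter.Tendsto η Filter.atTop (nhds 0))
    (hsup : ∀ n, ⨆ s ∈ S n, cmod (S n) {γ ∈ Γ | (γ ∩ s).Nonempty} q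
        ≤ ENNReal.ofReal (η n)) :
    Filter.Tendsto (fun n => cmod (S n) Γ q / cmod (S n) Γ p)
      Filter.atTop (nhds 0) :=
  stmt1_general S Γ p q hp hpq hpos η hη hη0 hsup
end

section
/- Let S be a finite cover of a set X, Γ a nonempty curve family, and p ≥ 1. Then the combinatorial p-modulus is attained: there exists an admissible metric ρ such that mod_p(Γ,ρ,S) = mod_p(Γ,S). -/
open scoped ENNReal
open Set

attribute [local instance] Classical.propDecidable

open CombModFin

/-!
Dividing `ρ` by `L_ρ(Γ,S)` does not change `mod_p(Γ,ρ,S)` and makes every curve of `Γ` have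
length at least `1`, so `mod_p(Γ,S)` is the infimum of `V_p` over metrics with `L_ρ(Γ,S) ≥ 1`.
Allowing the value `∞`, these metrics form a closed subset of the compact space `Set X → [0,∞]`
on which `V_p` is continuous, so `V_p` attains its minimum there. The minimiser has finite volume
(compare with `ρ ≡ 1`), hence is admissible, and it realises the modulus.
-/

namespace CombModFin

variable {X : Type*} {S : Finset (Set X)} {Γ : Set (Set X)} {ρ : Set X → ℝ≥0∞} {p : ℝ}

def normalizedMetrics (S : Finset (Set X)) (Γ : Set (Set X)) : Set (Set X → ℝ≥0∞) :=
  {ρ | 1 ≤ Lmin S ρ Γ}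

theorem mem_normalizedMetrics_iff :
    ρ ∈ normalizedMetrics S Γ ↔ ∀ γ ∈ Γ, 1 ≤ len S ρ γ := by
  simp only [normalizedMetrics, Lmin, mem_ofPred_eq, le_iInf_iff]

theorem continuous_len (S : Finset (Set X)) (K : Set X) : Continuous fun ρ => len S ρ K :=
  continuous_finsetSum _ fun s _ => continuous_apply s

theorem continuous_vol (S : Finset (Set X)) (p : ℝ) : Continuous fun ρ => vol S ρ p :=
  continuous_finsetSum _ fun s _ => ENNReal.continuous_rpow_const.comp (continuous_apply s)

theorem isClosed_normalizedMetrics (S : Finset (Set X)) (Γ : Set (Set X)) :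
    IsClosed (normalizedMetrics S Γ) := by
  simp only [normalizedMetrics, Lmin, le_iInf_iff, ofPred_forall]
  exact isClosed_iInter fun γ => isClosed_iInter fun _ =>
    isClosed_Ici.preimage (continuous_len S γ)

theorem len_div (S : Finset (Set X)) (ρ : Set X → ℝ≥0∞) (K : Set X) (c : ℝ≥0∞) :
    len S (fun s => ρ s / c) K = len S ρ K / c := by
  simp only [len, div_eq_mul_inv, Finset.sum_mul]

theorem vol_div (S : Finset (Set X)) (ρ : Set X → ℝ≥0∞) (c : ℝ≥0∞) (hp : 0 ≤ p) :
    vol S (fun s => ρ s / c) p = vol S ρ p / c ^ p := by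
  rw [vol, vol, div_eq_mul_inv, Finset.sum_mul]
  exact Finset.sum_congr rfl fun s _ => by rw [ENNReal.div_rpow_of_nonneg _ _ hp, div_eq_mul_inv]

theorem modWith_eq_vol_div_Lmin (hp : 0 ≤ p) :
    modWith S Γ ρ p = vol S (fun s => ρ s / Lmin S ρ Γ) p :=
  (vol_div S ρ _ hp).symm

theorem div_Lmin_mem_normalizedMetrics (h0 : Lmin S ρ Γ ≠ 0) (htop : Lmin S ρ Γ ≠ ∞) :
    (fun s => ρ s / Lmin S ρ Γ) ∈ normalizedMetrics S Γ := by
  refine mem_normalizedMetrics_iff.mpr fun γ hγ => ?_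
  rw [len_div, ENNReal.le_div_iff_mul_le (Or.inl h0) (Or.inl htop), one_mul]
  exact iInf₂_le γ hγ

theorem one_mem_normalizedMetrics (hcover : ∀ x : X, ∃ s ∈ S, x ∈ s)
    (hΓ : ∀ γ ∈ Γ, γ.Nonempty) : (fun _ => 1) ∈ normalizedMetrics S Γ := by
  refine mem_normalizedMetrics_iff.mpr fun γ hγ => ?_
  obtain ⟨x, hx⟩ := hΓ γ hγ
  obtain ⟨s, hsS, hxs⟩ := hcover x
  exact Finset.single_le_sum (f := fun _ => (1 : ℝ≥0∞)) (fun _ _ => zero_le)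
    (Finset.mem_filter.mpr ⟨hsS, x, hxs, hx⟩)

theorem vol_one_ne_top (S : Finset (Set X)) (p : ℝ) : vol S (fun _ => 1) p ≠ ∞ := by
  simp [vol]

theorem Lmin_ne_top (hρ : ∀ s ∈ S, ρ s ≠ ∞) (hΓne : Γ.Nonempty) : Lmin S ρ Γ ≠ ∞ := by
  obtain ⟨γ, hγ⟩ := hΓne
  refine ne_top_of_le_ne_top ?_ (iInf₂_le γ hγ)
  exact ENNReal.sum_ne_top.mpr fun s hs => hρ s (Finset.mem_filter.mp hs).1

theorem vol_ne_zero_s4 (hp : 0 < p) (hρ : Admissible S ρ) : vol S ρ p ≠ 0 := by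
  obtain ⟨s, hsS, hs0⟩ := hρ.2
  intro h
  exact hs0 ((ENNReal.rpow_eq_zero_iff_of_pos hp).mp (Finset.sum_eq_zero_iff.mp h s hsS))

theorem modWith_eq_top_of_Lmin_eq_zero (hp : 0 < p) (hρ : Admissible S ρ)
    (hL : Lmin S ρ Γ = 0) : modWith S Γ ρ p = ∞ := by
  rw [modWith, hL, ENNReal.zero_rpow_of_pos hp, ENNReal.div_zero (vol_ne_zero_s4 hp hρ)]

theorem modWith_le_vol (hp : 0 < p) (hρ : ρ ∈ normalizedMetrics S Γ) :
    modWith S Γ ρ p ≤ vol S ρ p :=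
  ENNReal.div_le_of_le_mul (le_mul_of_one_le_right zero_le (ENNReal.one_le_rpow hρ hp))

theorem admissible_of_mem_normalizedMetrics (hp : 0 < p) (hΓne : Γ.Nonempty)
    (hρ : ρ ∈ normalizedMetrics S Γ) (hvol : vol S ρ p ≠ ∞) : Admissible S ρ := by
  refine ⟨fun s hs => ?_, ?_⟩
  · have : ρ s ^ p ≠ ∞ := ne_top_of_le_ne_top hvol
      (Finset.single_le_sum (f := fun s => ρ s ^ p) (fun _ _ => zero_le) hs)
    exact fun h => this ((ENNReal.rpow_eq_top_iff_of_pos hp).mpr h)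
  · by_contra! h
    obtain ⟨γ, hγ⟩ := hΓne
    have hlen : len S ρ γ = 0 :=
      Finset.sum_eq_zero fun s hs => h s (Finset.mem_filter.mp hs).1
    simpa [hlen] using mem_normalizedMetrics_iff.mp hρ γ hγ

theorem vol_le_modWith_of_isMinOn (hp : 0 < p) (hΓne : Γ.Nonempty) {ρ₀ : Set X → ℝ≥0∞}
    (hmin : IsMinOn (fun ρ => vol S ρ p) (normalizedMetrics S Γ) ρ₀) (hρ : Admissible S ρ) :
    vol S ρ₀ p ≤ modWith S Γ ρ p := by
  by_cases hL : Lmin S ρ Γ = 0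
  · simp [modWith_eq_top_of_Lmin_eq_zero hp hρ hL]
  rw [modWith_eq_vol_div_Lmin hp.le]
  exact hmin (div_Lmin_mem_normalizedMetrics hL (Lmin_ne_top hρ.1 hΓne))

end CombModFin

/-- Existence of optimal metrics: for a finite cover `S`, a nonempty curve family `Γ` and
`p ≥ 1`, the combinatorial `p`-modulus is attained by some admissible metric. -/
theorem stmt4 {X : Type*} (S : Finset (Set X)) (hcover : ∀ x : X, ∃ s ∈ S, x ∈ s)
    (Γ : Set (Set X)) (hΓ : ∀ γ ∈ Γ, γ.Nonempty) (hΓne : Γ.Nonempty)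
    (p : ℝ) (hp : 1 ≤ p) :
    ∃ ρ : Set X → ℝ≥0∞, Admissible S ρ ∧ modWith S Γ ρ p = cmod S Γ p := by
  have hp0 : 0 < p := one_pos.trans_le hp
  have hone := one_mem_normalizedMetrics hcover hΓ
  obtain ⟨ρ₀, hρ₀, hmin⟩ := (isClosed_normalizedMetrics S Γ).isCompact.exists_isMinOn ⟨_, hone⟩
    (continuous_vol S p).continuousOn
  have hvol : vol S ρ₀ p ≠ ∞ := ne_top_of_le_ne_top (vol_one_ne_top S p) (hmin hone)
  have hadm := admissible_of_mem_normalizedMetrics hp0 hΓne hρ₀ hvol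
  refine ⟨ρ₀, hadm, le_antisymm ?_ (iInf₂_le ρ₀ hadm)⟩
  exact (modWith_le_vol hp0 hρ₀).trans
    (le_iInf₂ fun ρ hρ => vol_le_modWith_of_isMinOn hp0 hΓne hmin hρ)
end
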